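/- For the ideal similarity matrix of a partition into K nonempty clusters, there is an orthonormal basis of the eigenspace for eigenvalue 1 of L = D^{−1/2}SD^{−1/2} consisting of the normalized cluster indicator vectors; after row-normalizing the L×K matrix U of these eigenvectors, two rows u_{(i)} and u_{(j)} are equal if i and j are in the same cluster and orthogonal otherwise. -/
import Mathlib


open Matrix Module

/-- For the ideal similarity matrix of a partition into `K` nonempty
clusters, the normalized cluster-indicator vectors `u t = D^{1/2}1_{S_t}/‖D^{1/2}1_{S_t}‖`
form an orthonormal family of eigenvectors spanning the eigenspace of `L = D^{−1/2}SD^{−1/2}`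
for eigenvalue `1`; after row-normalizing the `L×K` matrix `U` of these eigenvectors,
two rows `u_{(i)}`, `u_{(j)}` of `U_*` are equal if `i, j` lie in the same cluster and
orthogonal otherwise. -/
theorem ideal_laplacian_eigenvectors_and_rows
    {L K : ℕ} (c : Fin L → Fin K) (hc : Function.Surjective c)
    (S : Matrix (Fin L) (Fin L) ℝ)
    (hS : ∀ i j, S i j = if c i = c j then 1 else 0)
    (d : Fin L → ℝ) (hd : ∀ i, d i = ∑ j, S i j)
    (Lap : Matrix (Fin L) (Fin L) ℝ)
    (hLap : ∀ i j, Lap i j = S i j / (Real.sqrt (d i) * Real.sqrt (d j)))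
    (u : Fin K → Fin L → ℝ)
    (hu : ∀ t i, u t i =
      (if c i = t then Real.sqrt (d i) else 0) /
        Real.sqrt (∑ i' ∈ Finset.univ.filter fun i' => c i' = t, d i'))
    (U : Matrix (Fin L) (Fin K) ℝ) (hU : ∀ i t, U i t = u t i)
    (Ustar : Matrix (Fin L) (Fin K) ℝ)
    (hUstar : ∀ i t, Ustar i t = U i t / Real.sqrt (∑ s, (U i s) ^ 2)) :
    (∀ t, Lap.mulVec (u t) = u t) ∧
    (∀ s t, ∑ i, u s i * u t i = if s = t then 1 else 0) ∧
    (Module.End.eigenspace (Matrix.toLin' Lap) (1 : ℝ) =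
      Submodule.span ℝ (Set.range u)) ∧
    (∀ i j, c i = c j → (fun t => Ustar i t) = fun t => Ustar j t) ∧
    (∀ i j, c i ≠ c j → ∑ t, Ustar i t * Ustar j t = 0) := by
  classical
  set n : Fin K → ℝ := fun t => ((Finset.univ.filter fun i => c i = t).card : ℝ) with hn
  have hnpos : ∀ t, (0:ℝ) < n t := by
    intro t
    obtain ⟨i, hi⟩ := hc t
    have hmem : i ∈ Finset.univ.filter fun i' => c i' = t := by simp [hi]
    have h0 : (0:ℝ) < ((Finset.univ.filter fun i' => c i' = t).card : ℝ) := by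
      exact_mod_cast Finset.card_pos.mpr ⟨i, hmem⟩
    exact h0
  have hsq : ∀ t, Real.sqrt (n t) * Real.sqrt (n t) = n t := fun t =>
    Real.mul_self_sqrt (le_of_lt (hnpos t))
  have hsqrt_pos : ∀ t, 0 < Real.sqrt (n t) := fun t => Real.sqrt_pos.mpr (hnpos t)
  have hd' : ∀ i, d i = n (c i) := by
    intro i
    rw [hd]
    have h1 : ∀ j, S i j = if c j = c i then (1:ℝ) else 0 := by
      intro j; rw [hS]; simp [eq_comm]
    simp only [h1]
    rw [Finset.sum_boole]
  have hsum2 : ∀ t, (∑ i' ∈ Finset.univ.filter fun i' => c i' = t, d i') = n t ^ 2 := by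
    intro t
    have h1 : ∀ i' ∈ Finset.univ.filter fun i' => c i' = t, d i' = n t := by
      intro i' hi'
      rw [Finset.mem_filter] at hi'
      rw [hd', hi'.2]
    rw [Finset.sum_congr rfl h1, Finset.sum_const, nsmul_eq_mul]
    rw [sq]
  have hu' : ∀ t i, u t i = if c i = t then (Real.sqrt (n t))⁻¹ else 0 := by
    intro t i
    rw [hu, hsum2, Real.sqrt_sq (le_of_lt (hnpos t))]
    by_cases h : c i = t
    · rw [if_pos h, if_pos h, hd', h]
      rw [eq_comm, inv_eq_iff_eq_inv, eq_comm, inv_div]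
      rw [div_eq_iff (ne_of_gt (hsqrt_pos t)), hsq]
    · rw [if_neg h, if_neg h, zero_div]
  have hLap' : ∀ i j, Lap i j = if c j = c i then (n (c i))⁻¹ else 0 := by
    intro i j
    rw [hLap, hS]
    by_cases h : c i = c j
    · rw [if_pos h, if_pos h.symm, hd', hd', ← h, hsq, one_div]
    · rw [if_neg h, if_neg (fun hh => h hh.symm), zero_div]
  -- eigenvector property
  have hmul : ∀ t, Lap.mulVec (u t) = u t := by
    intro t
    funext i
    rw [Matrix.mulVec, dotProduct]
    have key : ∀ j, Lap i j * u t j =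
        if c i = t then (if c j = t then (n t)⁻¹ * (Real.sqrt (n t))⁻¹ else 0) else 0 := by
      intro j
      rw [hLap', hu']
      by_cases h1 : c i = t
      · by_cases h2 : c j = t
        · rw [if_pos (h2.trans h1.symm), if_pos h2, if_pos h1, if_pos h2, h1]
        · rw [if_neg h2, mul_zero, if_pos h1, if_neg h2]
      · by_cases h2 : c j = t
        · rw [if_neg (fun hh => h1 (hh.symm.trans h2)), zero_mul, if_neg h1]
        · rw [if_neg h2, mul_zero, if_neg h1]
    simp only [key]
    by_cases h1 : c i = t
    · simp only [if_pos h1]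
      rw [← Finset.sum_filter, Finset.sum_const, nsmul_eq_mul, hu', if_pos h1]
      rw [show ((Finset.univ.filter fun j => c j = t).card : ℝ) = n t from rfl]
      rw [← mul_assoc, mul_inv_cancel₀ (ne_of_gt (hnpos t)), one_mul]
    · simp only [if_neg h1, Finset.sum_const_zero, hu', if_neg h1]
  -- orthonormality
  have horth : ∀ s t, ∑ i, u s i * u t i = if s = t then 1 else 0 := by
    intro s t
    by_cases hst : s = t
    · subst hst
      rw [if_pos rfl]
      have key : ∀ i, u s i * u s i = if c i = s then (n s)⁻¹ else 0 := by
        intro i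
        rw [hu']
        by_cases h : c i = s
        · rw [if_pos h, if_pos h, ← mul_inv, hsq]
        · rw [if_neg h, mul_zero, if_neg h]
      simp only [key]
      rw [← Finset.sum_filter, Finset.sum_const, nsmul_eq_mul]
      exact mul_inv_cancel₀ (ne_of_gt (hnpos s))
    · rw [if_neg hst]
      apply Finset.sum_eq_zero
      intro i _
      rw [hu', hu']
      by_cases h : c i = s
      · rw [if_neg (fun hh => hst (h.symm.trans hh)), mul_zero]
      · rw [if_neg h, zero_mul]
  -- normalized rows
  have hUs : ∀ i t, Ustar i t = if c i = t then 1 else 0 := by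
    intro i t
    have hrownorm : (∑ s, (U i s) ^ 2) = (n (c i))⁻¹ := by
      have key : ∀ s, (U i s) ^ 2 = if c i = s then (n (c i))⁻¹ else 0 := by
        intro s
        rw [hU, hu']
        by_cases h : c i = s
        · rw [if_pos h, if_pos h, sq, ← mul_inv, hsq, h]
        · rw [if_neg h, if_neg h]; ring
      simp only [key]
      rw [Finset.sum_ite_eq]
      simp
    rw [hUstar, hrownorm, Real.sqrt_inv, div_eq_mul_inv, inv_inv, hU, hu']
    by_cases h : c i = t
    · rw [if_pos h, if_pos h, h, inv_mul_cancel₀ (ne_of_gt (hsqrt_pos t))]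
    · rw [if_neg h, if_neg h, zero_mul]
  refine ⟨hmul, horth, ?_, ?_, ?_⟩
  · -- eigenspace = span
    apply le_antisymm
    · intro v hv
      rw [Module.End.mem_eigenspace_iff] at hv
      have hv' : Lap.mulVec v = v := by
        rw [one_smul] at hv
        rw [← Matrix.toLin'_apply]
        exact hv
      set a : Fin K → ℝ := fun t => (∑ j ∈ Finset.univ.filter fun j => c j = t, v j) / n t
        with ha
      have hva : ∀ i, v i = a (c i) := by
        intro i
        have h1 := congrFun hv' i
        rw [Matrix.mulVec, dotProduct] at h1
        simp only [hLap'] at h1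
        rw [← h1]
        simp only [ite_mul, zero_mul]
        rw [← Finset.sum_filter, ← Finset.mul_sum]
        exact inv_mul_eq_div _ _
      have hrepr : v = ∑ t, (a t * Real.sqrt (n t)) • u t := by
        funext i
        rw [Finset.sum_apply]
        simp only [Pi.smul_apply, smul_eq_mul, hu']
        rw [Finset.sum_eq_single (c i)]
        · rw [if_pos rfl, mul_assoc, mul_inv_cancel₀ (ne_of_gt (hsqrt_pos (c i))), mul_one,
            hva i]
        · intro t _ ht
          rw [if_neg (fun hh => ht hh.symm), mul_zero]
        · intro h; exact absurd (Finset.mem_univ _) h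
      rw [hrepr]
      exact Submodule.sum_mem _ fun t _ =>
        Submodule.smul_mem _ _ (Submodule.subset_span ⟨t, rfl⟩)
    · rw [Submodule.span_le]
      rintro _ ⟨t, rfl⟩
      rw [SetLike.mem_coe, Module.End.mem_eigenspace_iff]
      rw [one_smul, Matrix.toLin'_apply]
      exact hmul t
  · intro i j hij
    funext t
    rw [hUs, hUs, hij]
  · intro i j hij
    apply Finset.sum_eq_zero
    intro t _
    rw [hUs, hUs]
    by_cases h : c i = t
    · rw [if_neg (fun hh : c j = t => hij (h.trans hh.symm)), mul_zero]
    · rw [if_neg h, zero_mul]
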